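/- arXiv:1411.7966 — 2 statements merged into one kernel-verified Lean document; each statement's English description precedes it below -/
import Mathlib

section
/- Let ρ > 0. The function μ_Y(β) = (1 + tan²β)/(4 tan β) + (ρ/4) tan β, defined for β ∈ (0, π/2), attains its unique global minimum at β*_Y = arctan(1/√(1+ρ)), and the minimum value is μ*_Y = √(1+ρ)/2. -/
/-!
Writing `t = tan β` and `s = √(1 + ρ)`, the mass is `(1 + s²t²) / (4t)`, and
`μ_Y - s / 2 = (s t - 1)² / (4 t)`. So on `t > 0` the minimum `s / 2` is attained exactly at
`t = 1 / s`, and `tan` is injective on `(0, π/2)`.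
-/

open Real

/-- The yield-designed mass as a function of `t = tan β`. -/
noncomputable def yieldMass (ρ t : ℝ) : ℝ := (1 + t ^ 2) / (4 * t) + ρ / 4 * t

lemma yieldMass_sub_sqrt_div_two {ρ t : ℝ} (hρ : -1 ≤ ρ) (ht : t ≠ 0) :
    yieldMass ρ t - √(1 + ρ) / 2 = (√(1 + ρ) * t - 1) ^ 2 / (4 * t) := by
  have hs : √(1 + ρ) ^ 2 = 1 + ρ := sq_sqrt (by linarith)
  unfold yieldMass
  field_simp
  linear_combination (-2 * t ^ 2) * hs

lemma yieldMass_one_div_sqrt {ρ : ℝ} (hρ : -1 < ρ) :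
    yieldMass ρ (1 / √(1 + ρ)) = √(1 + ρ) / 2 := by
  have hs : 0 < √(1 + ρ) := sqrt_pos.mpr (by linarith)
  have h := yieldMass_sub_sqrt_div_two hρ.le (one_div_pos.mpr hs).ne'
  rw [mul_one_div_cancel hs.ne', sub_self, zero_pow two_ne_zero, zero_div] at h
  linarith

lemma sqrt_div_two_lt_yieldMass {ρ t : ℝ} (hρ : -1 < ρ) (ht : 0 < t) (hne : t ≠ 1 / √(1 + ρ)) :
    √(1 + ρ) / 2 < yieldMass ρ t := by
  have hs : 0 < √(1 + ρ) := sqrt_pos.mpr (by linarith)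
  have hst : √(1 + ρ) * t - 1 ≠ 0 := fun h ↦ hne (by field_simp; linarith)
  have h := yieldMass_sub_sqrt_div_two hρ.le ht.ne'
  have : 0 < (√(1 + ρ) * t - 1) ^ 2 / (4 * t) := by positivity
  linarith

lemma arctan_mem_Ioo_of_pos {x : ℝ} (hx : 0 < x) : arctan x ∈ Set.Ioo 0 (π / 2) :=
  ⟨arctan_pos.mpr hx, arctan_lt_pi_div_two x⟩

theorem substructure_yield_optimal_angle (ρ : ℝ) (hρ : 0 < ρ)
    (μY : ℝ → ℝ)
    (hμY : ∀ β, μY β = (1 + Real.tan β ^ 2) / (4 * Real.tan β) + ρ / 4 * Real.tan β)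
    (βY : ℝ) (hβY : βY = Real.arctan (1 / Real.sqrt (1 + ρ))) :
    βY ∈ Set.Ioo 0 (π / 2) ∧
    (∀ β ∈ Set.Ioo 0 (π / 2), β ≠ βY → μY βY < μY β) ∧
    μY βY = Real.sqrt (1 + ρ) / 2 := by
  have hρ' : -1 < ρ := by linarith
  have hμ : ∀ β, μY β = yieldMass ρ (tan β) := hμY
  have hvalue : μY βY = √(1 + ρ) / 2 := by
    rw [hμ, hβY, tan_arctan, yieldMass_one_div_sqrt hρ']
  refine ⟨hβY ▸ arctan_mem_Ioo_of_pos (by positivity), fun β ⟨hβ₀, hβ₁⟩ hne ↦ ?_, hvalue⟩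
  have htan_ne : tan β ≠ 1 / √(1 + ρ) := fun h ↦
    hne (by rw [hβY, ← h, arctan_tan (by linarith [pi_div_two_pos]) hβ₁])
  rw [hvalue, hμ]
  exact sqrt_div_two_lt_yieldMass hρ' (tan_pos_of_pos_of_lt_pi_div_two hβ₀ hβ₁) htan_ne
end

section
/- Let ρ > 0 and let n ≥ 1 be a natural number. The function μ_Y(α) = (1/2)(1 − 2^{-n})·[tan α + ρ (1 + tan²α)/tan α], defined for α ∈ (0, π/2), attains its unique global minimum at α*_Y = arctan(√(ρ/(1+ρ))), and the minimum value is (1 − 2^{-n})·√(ρ(1+ρ)). In particular the minimizing angle does not depend on n. -/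
/-! On `(0, π/2)` the tangent is a bijection onto `(0, ∞)`, and with `t = tan α` the bracket
in `μ_Y` is `(1 + ρ) t + ρ / t`. By AM-GM, `a t + b / t - 2 √(a b) = (√a t - √b)² / t` for
`a, b, t > 0`, so `a t + b / t` has the unique minimiser `t = √(b / a)` on `(0, ∞)`, with
minimum `2 √(a b)`. The factor `1 - 2^{-n}` is positive and only scales the function. -/

open Real Set

section AMGM

variable {a b t : ℝ}

theorem mul_add_div_sub_two_sqrt_mul (ha : 0 ≤ a) (hb : 0 ≤ b) (ht : t ≠ 0) :
    a * t + b / t - 2 * √(a * b) = (√a * t - √b) ^ 2 / t := by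
  rw [sqrt_mul ha, eq_div_iff ht, sub_sq, mul_pow, sq_sqrt ha, sq_sqrt hb]
  field_simp
  ring

theorem mul_sqrt_div_add_div_sqrt_div (ha : 0 < a) (hb : 0 < b) :
    a * √(b / a) + b / √(b / a) = 2 * √(a * b) := by
  have hs : √(b / a) ≠ 0 := (sqrt_pos.2 (div_pos hb ha)).ne'
  rw [← sub_eq_zero, mul_add_div_sub_two_sqrt_mul ha.le hb.le hs, sqrt_div' b ha.le,
    mul_div_cancel₀ _ (sqrt_pos.2 ha).ne', sub_self]
  simp

theorem two_sqrt_mul_lt_mul_add_div (ha : 0 < a) (hb : 0 < b) (ht : 0 < t)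
    (hne : t ≠ √(b / a)) : 2 * √(a * b) < a * t + b / t := by
  have hsa : 0 < √a := sqrt_pos.2 ha
  have hgap : √a * t - √b ≠ 0 := by
    rw [sub_ne_zero]
    contrapose! hne
    rw [sqrt_div' b ha.le, ← hne, mul_div_cancel_left₀ _ hsa.ne']
  rw [← sub_pos, mul_add_div_sub_two_sqrt_mul ha.le hb.le ht.ne']
  exact div_pos (sq_pos_of_ne_zero hgap) ht

end AMGM

theorem add_mul_one_add_sq_div (ρ : ℝ) {t : ℝ} (ht : t ≠ 0) :
    t + ρ * (1 + t ^ 2) / t = (1 + ρ) * t + ρ / t := by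
  field_simp
  ring

theorem one_sub_two_rpow_neg_pos {x : ℝ} (hx : 0 < x) : 0 < 1 - (2 : ℝ) ^ (-x) :=
  sub_pos.2 (rpow_lt_one_of_one_lt_of_neg one_lt_two (neg_neg_of_pos hx))

theorem arctan_mem_Ioo_zero_pi_div_two {x : ℝ} (hx : 0 < x) : arctan x ∈ Ioo 0 (π / 2) :=
  ⟨arctan_pos.2 hx, arctan_lt_pi_div_two x⟩

theorem injOn_tan_Ioo_zero_pi_div_two : InjOn tan (Ioo 0 (π / 2)) :=
  injOn_tan.mono (Ioo_subset_Ioo_left (by linarith [pi_pos]))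

theorem superstructure_complexity_n_yield_optimum (ρ : ℝ) (hρ : 0 < ρ)
    (n : ℕ) (hn : 1 ≤ n)
    (μY : ℝ → ℝ)
    (hμY : ∀ α, μY α = 1 / 2 * (1 - (2 : ℝ) ^ (-(n : ℝ))) *
        (Real.tan α + ρ * (1 + Real.tan α ^ 2) / Real.tan α))
    (αY : ℝ) (hαY : αY = Real.arctan (Real.sqrt (ρ / (1 + ρ)))) :
    αY ∈ Set.Ioo 0 (π / 2) ∧
    (∀ α ∈ Set.Ioo 0 (π / 2), α ≠ αY → μY αY < μY α) ∧
    μY αY = (1 - (2 : ℝ) ^ (-(n : ℝ))) * Real.sqrt (ρ * (1 + ρ)) := by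
  set c := 1 - (2 : ℝ) ^ (-(n : ℝ))
  have hc : 0 < c := one_sub_two_rpow_neg_pos (Nat.cast_pos.2 hn)
  have ha : 0 < 1 + ρ := by linarith
  have hμ : ∀ α ∈ Ioo 0 (π / 2), μY α = 1 / 2 * c * ((1 + ρ) * tan α + ρ / tan α) :=
    fun α hα ↦ by
      rw [hμY, add_mul_one_add_sq_div ρ (tan_pos_of_pos_of_lt_pi_div_two hα.1 hα.2).ne']
  have hmem : αY ∈ Ioo 0 (π / 2) :=
    hαY ▸ arctan_mem_Ioo_zero_pi_div_two (sqrt_pos.2 (div_pos hρ ha))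
  have htanY : tan αY = √(ρ / (1 + ρ)) := by rw [hαY, tan_arctan]
  have hval : μY αY = c * √((1 + ρ) * ρ) := by
    rw [hμ αY hmem, htanY, mul_sqrt_div_add_div_sqrt_div ha hρ]
    ring
  refine ⟨hmem, fun α hα hne ↦ ?_, by rw [hval, mul_comm (1 + ρ)]⟩
  have htan : tan α ≠ √(ρ / (1 + ρ)) :=
    fun h ↦ hne (injOn_tan_Ioo_zero_pi_div_two hα hmem (h.trans htanY.symm))
  have hlt := two_sqrt_mul_lt_mul_add_div ha hρ (tan_pos_of_pos_of_lt_pi_div_two hα.1 hα.2) htan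
  rw [hval, hμ α hα]
  linarith [mul_lt_mul_of_pos_left hlt hc]
end
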